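/- Let A and B be nonnegative selfadjoint operators on a Hilbert space. Then for every natural number n, ‖(e^{−A/2ⁿ} e^{−B/2ⁿ})^{2ⁿ}‖ ≤ ‖e^{−A/2ⁿ} e^{−B/2ⁿ}‖^{2ⁿ} ≤ ‖e^{−A} e^{−B}‖. -/

import Mathlib

open MeasureTheory Filter
open scoped NNReal ENNReal
noncomputable section

/-- `S` is the semigroup `t ↦ e^{-tA}` of a nonnegative selfadjoint operator `A`:
a strongly continuous semigroup of selfadjoint contractions. -/
def IsNonnegSelfAdjointSemigroup {H : Type*} [NormedAddCommGroup H]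
    [InnerProductSpace ℂ H] [CompleteSpace H] (S : ℝ → H →L[ℂ] H) : Prop :=
  S 0 = 1 ∧
  (∀ s t : ℝ, 0 ≤ s → 0 ≤ t → S (s + t) = (S s).comp (S t)) ∧
  (∀ t : ℝ, 0 ≤ t → IsSelfAdjoint (S t)) ∧
  (∀ t : ℝ, 0 ≤ t → ‖S t‖ ≤ 1) ∧
  (∀ x : H, ContinuousOn (fun t => S t x) (Set.Ici (0 : ℝ)))

/-- `U` is the semigroup `t ↦ e^{-t(A+B)}` of the closed quadratic form sum `A + B`
(extended by `0` on the orthogonal complement of the closure of `Q(A) ∩ Q(B)`),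
characterized by Kato's Trotter product formula for form sums. -/
def IsTrotterFormSumSemigroup {H : Type*} [NormedAddCommGroup H]
    [InnerProductSpace ℂ H] [CompleteSpace H] (S T U : ℝ → H →L[ℂ] H) : Prop :=
  ∀ t : ℝ, 0 < t → ∀ x : H,
    Filter.Tendsto (fun n : ℕ => (((S (t / 2 ^ n)).comp (T (t / 2 ^ n))) ^ (2 ^ n)) x)
      Filter.atTop (nhds (U t x))

/-!
For selfadjoint `s`, `t` the C⋆-identity gives `‖s t‖² = ‖t s² t‖`, and since `t s² t` is
selfadjoint its norm is its spectral radius, which equals that of `s² t²` and so is at most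
`‖s² t²‖`. Applied to `s = e^{-A/2ⁿ⁺¹}`, `t = e^{-B/2ⁿ⁺¹}` this gives
`‖e^{-A/2ⁿ⁺¹} e^{-B/2ⁿ⁺¹}‖² ≤ ‖e^{-A/2ⁿ} e^{-B/2ⁿ}‖`, and the claim follows by induction.
-/

lemma spectralRadius_eq_iSup_diff_zero {𝕜 A : Type*} [NormedField 𝕜] [Ring A] [Algebra 𝕜 A]
    (a : A) : spectralRadius 𝕜 a = ⨆ k ∈ spectrum 𝕜 a \ {0}, (‖k‖₊ : ℝ≥0∞) := by
  refine le_antisymm ?_ (biSup_mono fun _ hk => hk.1)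
  calc spectralRadius 𝕜 a ≤ ⨆ k ∈ insert 0 (spectrum 𝕜 a \ {0}), (‖k‖₊ : ℝ≥0∞) :=
        biSup_mono fun k hk => by by_cases k = 0 <;> simp_all
    _ = _ := by rw [iSup_insert, nnnorm_zero, ENNReal.coe_zero, max_eq_right zero_le]

lemma spectralRadius_mul_comm {𝕜 A : Type*} [NormedField 𝕜] [Ring A] [Algebra 𝕜 A]
    (a b : A) : spectralRadius 𝕜 (a * b) = spectralRadius 𝕜 (b * a) := by
  rw [spectralRadius_eq_iSup_diff_zero, spectrum.nonzero_mul_comm,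
    ← spectralRadius_eq_iSup_diff_zero]

lemma IsSelfAdjoint.norm_mul_sq_le {A : Type*} [CStarAlgebra A] {a b : A}
    (ha : IsSelfAdjoint a) (hb : IsSelfAdjoint b) : ‖a * b‖ ^ 2 ≤ ‖a ^ 2 * b ^ 2‖ := by
  nontriviality A
  have hsq : ‖a * b‖ ^ 2 = ‖b * (a ^ 2 * b)‖ := by
    rw [sq, ← CStarRing.norm_star_mul_self, star_mul, ha.star_eq, hb.star_eq]
    noncomm_ring
  have hsa : IsSelfAdjoint (b * (a ^ 2 * b)) := by
    simpa [mul_assoc] using (ha.pow 2).conjugate_self hb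
  rw [hsq, ← coe_nnnorm, ← coe_nnnorm, NNReal.coe_le_coe, ← ENNReal.coe_le_coe,
    ← hsa.spectralRadius_eq_nnnorm, spectralRadius_mul_comm, mul_assoc, ← sq]
  exact spectrum.spectralRadius_le_nnnorm _

namespace IsNonnegSelfAdjointSemigroup

variable {H : Type*} [NormedAddCommGroup H] [InnerProductSpace ℂ H] [CompleteSpace H]
  {S T : ℝ → H →L[ℂ] H}

lemma map_add (hS : IsNonnegSelfAdjointSemigroup S) {s t : ℝ} (hs : 0 ≤ s) (ht : 0 ≤ t) :
    S (s + t) = S s * S t :=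
  hS.2.1 s t hs ht

lemma isSelfAdjoint (hS : IsNonnegSelfAdjointSemigroup S) {t : ℝ} (ht : 0 ≤ t) :
    IsSelfAdjoint (S t) :=
  hS.2.2.1 t ht

lemma apply_two_mul (hS : IsNonnegSelfAdjointSemigroup S) {t : ℝ} (ht : 0 ≤ t) :
    S (2 * t) = S t ^ 2 := by
  rw [two_mul, hS.map_add ht ht, sq]

lemma norm_mul_sq_le (hS : IsNonnegSelfAdjointSemigroup S) (hT : IsNonnegSelfAdjointSemigroup T)
    {t : ℝ} (ht : 0 ≤ t) : ‖S t * T t‖ ^ 2 ≤ ‖S (2 * t) * T (2 * t)‖ := by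
  rw [hS.apply_two_mul ht, hT.apply_two_mul ht]
  exact (hS.isSelfAdjoint ht).norm_mul_sq_le (hT.isSelfAdjoint ht)

lemma norm_mul_pow_two_pow_le (hS : IsNonnegSelfAdjointSemigroup S)
    (hT : IsNonnegSelfAdjointSemigroup T) (n : ℕ) {t : ℝ} (ht : 0 ≤ t) :
    ‖S t * T t‖ ^ 2 ^ n ≤ ‖S (2 ^ n * t) * T (2 ^ n * t)‖ := by
  induction n generalizing t with
  | zero => simp
  | succ n ih =>
    calc ‖S t * T t‖ ^ 2 ^ (n + 1) = (‖S t * T t‖ ^ 2) ^ 2 ^ n := by rw [pow_succ', pow_mul]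
      _ ≤ ‖S (2 * t) * T (2 * t)‖ ^ 2 ^ n := by gcongr; exact hS.norm_mul_sq_le hT ht
      _ ≤ ‖S (2 ^ (n + 1) * t) * T (2 ^ (n + 1) * t)‖ := by
        rw [pow_succ, mul_assoc]; exact ih (by positivity)

end IsNonnegSelfAdjointSemigroup

/-- `‖(e^{-A/2ⁿ} e^{-B/2ⁿ})^{2ⁿ}‖ ≤ ‖e^{-A/2ⁿ} e^{-B/2ⁿ}‖^{2ⁿ} ≤ ‖e^{-A} e^{-B}‖`. -/
theorem statement7 {H : Type*} [NormedAddCommGroup H] [InnerProductSpace ℂ H]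
    [CompleteSpace H] (S T : ℝ → H →L[ℂ] H)
    (hS : IsNonnegSelfAdjointSemigroup S) (hT : IsNonnegSelfAdjointSemigroup T) :
    ∀ n : ℕ,
      ‖((S (1 / 2 ^ n)).comp (T (1 / 2 ^ n))) ^ (2 ^ n)‖ ≤
        ‖(S (1 / 2 ^ n)).comp (T (1 / 2 ^ n))‖ ^ (2 ^ n) ∧
      ‖(S (1 / 2 ^ n)).comp (T (1 / 2 ^ n))‖ ^ (2 ^ n) ≤ ‖(S 1).comp (T 1)‖ := by
  intro n
  refine ⟨norm_pow_le' _ (Nat.two_pow_pos n), ?_⟩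
  have h := hS.norm_mul_pow_two_pow_le hT n (t := 1 / 2 ^ n) (by positivity)
  rwa [mul_one_div_cancel (by positivity)] at h
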